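/- With notation as in the inverse Stein identity (T = diag(t₁,…,t_{n-1}) with distinct unimodular t_i, P invertible Hermitian satisfying P - T·P·T* = E·E* - M·M* with E the all-ones vector and M the vector of unimodular w_i, t_n unimodular distinct from all t_i, X and Y the columns with entries x_i = (1 - t_n·conj(t_i))·e_i*·P⁻¹·(t_n·I - T)⁻¹·E and y_i = (1 - t_n·conj(t_i))·e_i*·P⁻¹·(t_n·I - T)⁻¹·M), for each i one has |x_i| = |y_i| and x_i ≠ 0. -/

import Mathlib

/-!
Put `D = c • 1 - T` with `‖c‖ = 1`. Substituting `T = c • 1 - D` into the Stein equation gives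
`D⁻¹ (P - T P Tᴴ) D⁻ᴴ = c D⁻¹ P + c̄ P D⁻ᴴ - P`, so for `Z = P⁻¹ D⁻¹` the Gram difference
`(Z E)(Z E)ᴴ - (Z M)(Z M)ᴴ` equals `c Z + c̄ Zᴴ - P⁻¹`. When `T = diag t`, its `(i, j)` entry is
`P⁻¹ i j` times `(1 - t j * conj (t i)) / ((c - t j) * conj (c - t i))`, and for distinct
unimodular `t j` this factor vanishes exactly when `i = j`. The diagonal gives `|x i| = |y i|`.
If `x i = 0`, then `(Z E) i = 0` and hence `(Z M) i = 0`, so the `i`-th row of the Gram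
difference vanishes; this kills the off-diagonal entries of the `i`-th row of `P⁻¹`, and then
`(Z E) i = 0` kills the diagonal one, contradicting the invertibility of `P⁻¹`.
-/

open Matrix ComplexConjugate

variable {𝕜 : Type*} [RCLike 𝕜]

theorem mul_conj_eq_one_of_norm_eq_one {a : 𝕜} (ha : ‖a‖ = 1) : a * conj a = 1 := by
  rw [RCLike.mul_conj, ha]; norm_num

theorem one_sub_mul_conj_ne_zero {a b : 𝕜} (hb : ‖b‖ = 1) (hab : a ≠ b) :
    1 - a * conj b ≠ 0 := by
  have hbb := mul_conj_eq_one_of_norm_eq_one hb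
  have hb0 : conj b ≠ 0 := fun h => by simp [h] at hbb
  have : 1 - a * conj b = (b - a) * conj b := by linear_combination -hbb
  rw [this]
  exact mul_ne_zero (sub_ne_zero.mpr hab.symm) hb0

theorem stein_kernel_partial_fractions {a b c : 𝕜} (hc : ‖c‖ = 1) (ha : c ≠ a) (hb : c ≠ b) :
    c * (c - a)⁻¹ + conj c * (conj c - conj b)⁻¹ - 1 =
      (c - a)⁻¹ * (conj c - conj b)⁻¹ * (1 - a * conj b) := by
  have ha' : c - a ≠ 0 := sub_ne_zero.mpr ha
  have hb' : conj c - conj b ≠ 0 := by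
    rw [← map_sub]; exact (map_ne_zero _).mpr (sub_ne_zero.mpr hb)
  field_simp
  linear_combination mul_conj_eq_one_of_norm_eq_one hc

variable {n : Type*} [Fintype n] [DecidableEq n]

theorem sub_mul_mul_conjTranspose_eq {c : 𝕜} (hc : ‖c‖ = 1) (T P : Matrix n n 𝕜) :
    P - T * P * Tᴴ = c • (P * (c • 1 - T)ᴴ) + conj c • ((c • 1 - T) * P)
      - (c • 1 - T) * P * (c • 1 - T)ᴴ := by
  have hcc := mul_conj_eq_one_of_norm_eq_one hc
  simp only [conjTranspose_sub, conjTranspose_smul, conjTranspose_one, mul_sub, sub_mul,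
    smul_mul_assoc, mul_smul_comm, Matrix.mul_one, Matrix.one_mul, smul_sub, smul_smul]
  rw [RCLike.star_def, hcc, mul_comm, hcc, one_smul]
  abel

theorem inv_mul_sub_mul_conjTranspose_mul_inv {c : 𝕜} (hc : ‖c‖ = 1) (T P : Matrix n n 𝕜)
    (hD : IsUnit (c • 1 - T).det) :
    (c • 1 - T)⁻¹ * (P - T * P * Tᴴ) * (c • 1 - T)⁻¹ᴴ =
      c • ((c • 1 - T)⁻¹ * P) + conj c • (P * (c • 1 - T)⁻¹ᴴ) - P := by
  rw [sub_mul_mul_conjTranspose_eq hc]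
  set D := c • 1 - T
  have hDH : IsUnit Dᴴ.det := by rwa [det_conjTranspose, isUnit_star]
  rw [conjTranspose_nonsing_inv]
  simp only [mul_sub, sub_mul, mul_add, add_mul, mul_smul_comm, smul_mul_assoc,
    ← Matrix.mul_assoc, nonsing_inv_mul _ hD, Matrix.one_mul]
  simp only [Matrix.mul_assoc, mul_nonsing_inv _ hDH, Matrix.mul_one]

theorem gram_sub_gram_eq_of_stein {k : Type*} [Fintype k] {c : 𝕜} (hc : ‖c‖ = 1)
    {T P : Matrix n n 𝕜} (hP : P.IsHermitian) (hPdet : IsUnit P.det) (hD : IsUnit (c • 1 - T).det)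
    {E M : Matrix n k 𝕜} (hStein : P - T * P * Tᴴ = E * Eᴴ - M * Mᴴ) :
    P⁻¹ * (c • 1 - T)⁻¹ * E * (P⁻¹ * (c • 1 - T)⁻¹ * E)ᴴ
        - P⁻¹ * (c • 1 - T)⁻¹ * M * (P⁻¹ * (c • 1 - T)⁻¹ * M)ᴴ =
      c • (P⁻¹ * (c • 1 - T)⁻¹) + conj c • (P⁻¹ * (c • 1 - T)⁻¹)ᴴ - P⁻¹ := by
  set D := c • 1 - T
  have hPinvH : P⁻¹ᴴ = P⁻¹ := hP.inv
  calc _ = P⁻¹ * (D⁻¹ * (E * Eᴴ - M * Mᴴ) * D⁻¹ᴴ) * P⁻¹ := by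
        simp only [conjTranspose_mul, hPinvH, mul_sub, sub_mul, Matrix.mul_assoc]
    _ = P⁻¹ * (c • (D⁻¹ * P) + conj c • (P * D⁻¹ᴴ) - P) * P⁻¹ := by
        rw [← hStein, inv_mul_sub_mul_conjTranspose_mul_inv hc T P hD]
    _ = _ := by
        simp only [conjTranspose_mul, hPinvH, mul_sub, sub_mul, mul_add, add_mul, mul_smul_comm,
          smul_mul_assoc, Matrix.mul_assoc, mul_nonsing_inv _ hPdet, Matrix.mul_one]
        simp only [← Matrix.mul_assoc, nonsing_inv_mul _ hPdet, Matrix.one_mul]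

theorem inv_smul_one_sub_diagonal {K : Type*} [Field K] {c : K} {t : n → K}
    (h : ∀ j, c ≠ t j) :
    (c • (1 : Matrix n n K) - diagonal t)⁻¹ = diagonal fun j => (c - t j)⁻¹ := by
  refine inv_eq_left_inv ?_
  rw [smul_one_eq_diagonal, diagonal_sub, diagonal_mul_diagonal, ← diagonal_one]
  exact congrArg diagonal (funext fun j => inv_mul_cancel₀ (sub_ne_zero.mpr (h j)))

theorem isUnit_det_smul_one_sub_diagonal {K : Type*} [Field K] {c : K} {t : n → K}
    (h : ∀ j, c ≠ t j) : IsUnit (c • (1 : Matrix n n K) - diagonal t).det := by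
  rw [smul_one_eq_diagonal, diagonal_sub, det_diagonal]
  exact isUnit_iff_ne_zero.mpr (Finset.prod_ne_zero_iff.mpr fun j _ => sub_ne_zero.mpr (h j))

theorem gram_sub_gram_apply_of_stein_diagonal {c : 𝕜} (hc : ‖c‖ = 1) {t : n → 𝕜}
    (hct : ∀ j, c ≠ t j) {P : Matrix n n 𝕜} (hP : P.IsHermitian) (hPdet : IsUnit P.det)
    {E M : Matrix n (Fin 1) 𝕜}
    (hStein : P - diagonal t * P * (diagonal t)ᴴ = E * Eᴴ - M * Mᴴ) (i j : n) :
    (P⁻¹ * (c • 1 - diagonal t)⁻¹ * E) i 0 * conj ((P⁻¹ * (c • 1 - diagonal t)⁻¹ * E) j 0)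
        - (P⁻¹ * (c • 1 - diagonal t)⁻¹ * M) i 0 *
          conj ((P⁻¹ * (c • 1 - diagonal t)⁻¹ * M) j 0) =
      P⁻¹ i j * ((c - t j)⁻¹ * (conj c - conj (t i))⁻¹ * (1 - t j * conj (t i))) := by
  have hgram := congrArg (· i j)
    (gram_sub_gram_eq_of_stein hc hP hPdet (isUnit_det_smul_one_sub_diagonal hct) hStein)
  rw [inv_smul_one_sub_diagonal hct] at hgram ⊢
  have hcol : ∀ N : Matrix n (Fin 1) 𝕜, (N * Nᴴ) i j = N i 0 * conj (N j 0) := fun N => by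
    simp [mul_apply]
  rw [Matrix.sub_apply, hcol, hcol] at hgram
  rw [hgram, ← stein_kernel_partial_fractions hc (hct j) (hct i)]
  simp only [Matrix.sub_apply, Matrix.add_apply, Matrix.smul_apply, smul_eq_mul,
    conjTranspose_apply, mul_diagonal, star_mul', hP.inv.apply, star_inv₀, star_sub,
    RCLike.star_def]
  ring

theorem norm_apply_eq_of_stein_diagonal {c : 𝕜} (hc : ‖c‖ = 1) {t : n → 𝕜} (hct : ∀ j, c ≠ t j)
    {P : Matrix n n 𝕜} (hP : P.IsHermitian) (hPdet : IsUnit P.det) {E M : Matrix n (Fin 1) 𝕜}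
    (hStein : P - diagonal t * P * (diagonal t)ᴴ = E * Eᴴ - M * Mᴴ) {i : n} (hti : ‖t i‖ = 1) :
    ‖(P⁻¹ * (c • 1 - diagonal t)⁻¹ * E) i 0‖ =
      ‖(P⁻¹ * (c • 1 - diagonal t)⁻¹ * M) i 0‖ := by
  have h := gram_sub_gram_apply_of_stein_diagonal hc hct hP hPdet hStein i i
  rw [mul_conj_eq_one_of_norm_eq_one hti, sub_self, mul_zero, mul_zero, sub_eq_zero,
    RCLike.mul_conj, RCLike.mul_conj] at h
  exact (pow_left_inj₀ (norm_nonneg _) (norm_nonneg _) two_ne_zero).mp (by exact_mod_cast h)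

theorem inv_apply_eq_zero_of_stein_diagonal {c : 𝕜} (hc : ‖c‖ = 1) {t : n → 𝕜}
    (hct : ∀ j, c ≠ t j) (ht : ∀ j, ‖t j‖ = 1) (htinj : Function.Injective t)
    {P : Matrix n n 𝕜} (hP : P.IsHermitian) (hPdet : IsUnit P.det) {E M : Matrix n (Fin 1) 𝕜}
    (hStein : P - diagonal t * P * (diagonal t)ᴴ = E * Eᴴ - M * Mᴴ) {i : n} (hEi : E i 0 ≠ 0)
    (hE0 : (P⁻¹ * (c • 1 - diagonal t)⁻¹ * E) i 0 = 0)
    (hM0 : (P⁻¹ * (c • 1 - diagonal t)⁻¹ * M) i 0 = 0) (j : n) : P⁻¹ i j = 0 := by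
  have hoff : ∀ k, k ≠ i → P⁻¹ i k = 0 := fun k hki => by
    have h := gram_sub_gram_apply_of_stein_diagonal hc hct hP hPdet hStein i k
    rw [hE0, hM0, zero_mul, zero_mul, sub_zero, eq_comm, mul_eq_zero] at h
    refine h.resolve_right (mul_ne_zero (mul_ne_zero ?_ ?_)
      (one_sub_mul_conj_ne_zero (ht i) (htinj.ne hki)))
    · exact inv_ne_zero (sub_ne_zero.mpr (hct k))
    · rw [← map_sub]
      exact inv_ne_zero ((map_ne_zero _).mpr (sub_ne_zero.mpr (hct i)))
  rcases eq_or_ne j i with rfl | hji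
  · rw [inv_smul_one_sub_diagonal hct, mul_apply, Finset.sum_eq_single j, mul_diagonal] at hE0
    · exact (mul_eq_zero.mp ((mul_eq_zero.mp hE0).resolve_right hEi)).resolve_right
        (inv_ne_zero (sub_ne_zero.mpr (hct j)))
    · intro k _ hkj
      rw [mul_diagonal, hoff k hkj, zero_mul, zero_mul]
    · simp
  · exact hoff j hji

theorem entries_abs_eq_and_nonzero_general (m : ℕ) (t : Fin m → ℂ) (tN : ℂ)
    (ht : ∀ i, ‖t i‖ = 1)
    (htinj : Function.Injective t)
    (htN : ‖tN‖ = 1) (htNt : ∀ i, tN ≠ t i)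
    (T : Matrix (Fin m) (Fin m) ℂ) (hT : T = Matrix.diagonal t)
    (E M : Matrix (Fin m) (Fin 1) ℂ)
    (hE : E = Matrix.of fun _ _ => (1 : ℂ))
    (P : Matrix (Fin m) (Fin m) ℂ) (hPH : P.IsHermitian) (hPinv : IsUnit P.det)
    (hStein : P - T * P * Tᴴ = E * Eᴴ - M * Mᴴ)
    (x y : Fin m → ℂ)
    (hx : ∀ i, x i = (1 - tN * conj (t i)) *
      ((P⁻¹ * (tN • (1 : Matrix (Fin m) (Fin m) ℂ) - T)⁻¹ * E) i 0))
    (hy : ∀ i, y i = (1 - tN * conj (t i)) *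
      ((P⁻¹ * (tN • (1 : Matrix (Fin m) (Fin m) ℂ) - T)⁻¹ * M) i 0)) :
    ∀ i, ‖x i‖ = ‖y i‖ ∧ x i ≠ 0 := by
  subst hT
  intro i
  have hnorm := norm_apply_eq_of_stein_diagonal htN htNt hPH hPinv hStein (ht i)
  refine ⟨by rw [hx, hy, norm_mul, norm_mul, hnorm], ?_⟩
  rw [hx]
  refine mul_ne_zero (one_sub_mul_conj_ne_zero (ht i) (htNt i)) fun hE0 => ?_
  have hM0 := norm_eq_zero.mp (hnorm ▸ norm_eq_zero.mpr hE0)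
  have hrow := inv_apply_eq_zero_of_stein_diagonal htN htNt ht htinj hPH hPinv hStein
    (by simp [hE]) hE0 hM0
  exact (isUnit_nonsing_inv_det P hPinv).ne_zero (det_eq_zero_of_row_eq_zero i hrow)

theorem entries_abs_eq_and_nonzero (m : ℕ) (t : Fin m → ℂ) (w : Fin m → ℂ) (tN : ℂ)
    (ht : ∀ i, ‖t i‖ = 1) (hw : ∀ i, ‖w i‖ = 1)
    (htinj : Function.Injective t)
    (htN : ‖tN‖ = 1) (htNt : ∀ i, tN ≠ t i)
    (T : Matrix (Fin m) (Fin m) ℂ) (hT : T = Matrix.diagonal t)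
    (E M : Matrix (Fin m) (Fin 1) ℂ)
    (hE : E = Matrix.of fun _ _ => (1 : ℂ))
    (hM : M = Matrix.of fun i _ => w i)
    (P : Matrix (Fin m) (Fin m) ℂ) (hPH : P.IsHermitian) (hPinv : IsUnit P.det)
    (hStein : P - T * P * Tᴴ = E * Eᴴ - M * Mᴴ)
    (x y : Fin m → ℂ)
    (hx : ∀ i, x i = (1 - tN * conj (t i)) *
      ((P⁻¹ * (tN • (1 : Matrix (Fin m) (Fin m) ℂ) - T)⁻¹ * E) i 0))
    (hy : ∀ i, y i = (1 - tN * conj (t i)) *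
      ((P⁻¹ * (tN • (1 : Matrix (Fin m) (Fin m) ℂ) - T)⁻¹ * M) i 0)) :
    ∀ i, ‖x i‖ = ‖y i‖ ∧ x i ≠ 0 :=
  entries_abs_eq_and_nonzero_general m t tN ht htinj htN htNt T hT E M hE P hPH hPinv hStein x y hx
    hy
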